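/- arXiv:1707.03487 — 3 statements merged into one kernel-verified Lean document; each statement's English description precedes it below -/
import Mathlib

section
/- Let x_1, …, x_m be positive real numbers with m ≥ 2, not all equal, let x̄ = (1/m)∑ x_i be their mean, and fix q ∈ (0,1). Define g(θ) = ∑_{i=1}^m exp(−(1−q)x_i/θ)(x_i − θ) for θ > 0. Then for every θ ≥ x̄, g(θ) < 0. -/
/-!
Each summand `exp (-(1 - q) t / θ) (t - θ)` is at most `exp (-(1 - q)) (t - θ)`, strictly
unless `t = θ`, because `t ↦ exp (-(1 - q) t / θ)` is strictly decreasing. Summing, `g θ` is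
strictly below `exp (-(1 - q)) ∑ (x i - θ) = exp (-(1 - q)) m (x̄ - θ) ≤ 0`.
-/

open Real Finset

namespace StrictAnti

variable {f : ℝ → ℝ}

lemma mul_sub_le (hf : StrictAnti f) (t s : ℝ) : f t * (t - s) ≤ f s * (t - s) := by
  rcases lt_trichotomy t s with h | rfl | h
  · exact mul_le_mul_of_nonpos_right (hf h).le (by linarith)
  · rfl
  · exact mul_le_mul_of_nonneg_right (hf h).le (by linarith)

lemma mul_sub_lt (hf : StrictAnti f) {t s : ℝ} (hts : t ≠ s) :
    f t * (t - s) < f s * (t - s) := by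
  rcases hts.lt_or_gt with h | h
  · exact mul_lt_mul_of_neg_right (hf h) (by linarith)
  · exact mul_lt_mul_of_pos_right (hf h) (by linarith)

lemma sum_mul_sub_lt {ι : Type*} {s : Finset ι} (hf : StrictAnti f) (x : ι → ℝ) (c : ℝ)
    (h : ∃ i ∈ s, x i ≠ c) : ∑ i ∈ s, f (x i) * (x i - c) < f c * ∑ i ∈ s, (x i - c) := by
  obtain ⟨i, hi, hic⟩ := h
  rw [mul_sum]
  exact sum_lt_sum (fun j _ => hf.mul_sub_le _ _) ⟨i, hi, hf.mul_sub_lt hic⟩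

end StrictAnti

lemma strictAnti_exp_neg_mul_div {c θ : ℝ} (hc : 0 < c) (hθ : 0 < θ) :
    StrictAnti fun t => exp (-c * t / θ) :=
  exp_strictMono.comp_strictAnti fun _ _ hab => by
    rw [div_lt_div_iff_of_pos_right hθ]
    nlinarith

lemma sum_sub_eq_card_mul_sub_mean {m : ℕ} (hm : 0 < m) (x : Fin m → ℝ) (θ : ℝ) :
    ∑ i, (x i - θ) = m * ((∑ i, x i) / m - θ) := by
  rw [sum_sub_distrib, sum_const, card_univ, Fintype.card_fin, nsmul_eq_mul, mul_sub,
    mul_div_cancel₀ _ (by positivity)]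

theorem mlq_negative_above_mean_general (m : ℕ) (x : Fin m → ℝ)
    (hpos : ∀ i, 0 < x i) (hne : ¬ ∀ i j, x i = x j) (q : ℝ) (hq : q ∈ Set.Ioo (0:ℝ) 1)
    (xbar : ℝ) (hxbar : xbar = (∑ i, x i) / m)
    (g : ℝ → ℝ)
    (hg : ∀ θ, g θ = ∑ i, Real.exp (-(1 - q) * x i / θ) * (x i - θ)) :
    ∀ θ, xbar ≤ θ → g θ < 0 := by
  intro θ hθ
  obtain ⟨i, j, hij⟩ : ∃ i j, x i ≠ x j := by simpa using hne
  have hm : 0 < m := Fin.pos i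
  have hxbar_pos : 0 < xbar := by
    rw [hxbar]
    exact div_pos (sum_pos (fun k _ => hpos k) ⟨i, mem_univ i⟩) (by exact_mod_cast hm)
  have hθ_pos : 0 < θ := hxbar_pos.trans_le hθ
  have hk : ∃ k ∈ univ, x k ≠ θ := by
    by_contra! h
    exact hij ((h i (mem_univ i)).trans (h j (mem_univ j)).symm)
  calc g θ = ∑ k, exp (-(1 - q) * x k / θ) * (x k - θ) := hg θ
    _ < exp (-(1 - q) * θ / θ) * ∑ k, (x k - θ) :=
      (strictAnti_exp_neg_mul_div (by linarith [hq.2]) hθ_pos).sum_mul_sub_lt x θ hk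
    _ ≤ 0 := by
      rw [sum_sub_eq_card_mul_sub_mean hm, ← hxbar]
      exact mul_nonpos_of_nonneg_of_nonpos (exp_pos _).le
        (mul_nonpos_of_nonneg_of_nonpos (by positivity) (by linarith))

theorem mlq_negative_above_mean (m : ℕ) (hm : 2 ≤ m) (x : Fin m → ℝ)
    (hpos : ∀ i, 0 < x i) (hne : ¬ ∀ i j, x i = x j) (q : ℝ) (hq : q ∈ Set.Ioo (0:ℝ) 1)
    (xbar : ℝ) (hxbar : xbar = (∑ i, x i) / m)
    (g : ℝ → ℝ)
    (hg : ∀ θ, g θ = ∑ i, Real.exp (-(1 - q) * x i / θ) * (x i - θ)) :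
    ∀ θ, xbar ≤ θ → g θ < 0 :=
  mlq_negative_above_mean_general m x hpos hne q hq xbar hxbar g hg
end

section
/- Let x_1, …, x_m be positive real numbers with m ≥ 2, not all equal, let x̄ be their mean, and fix q ∈ (0,1). Define g(θ) = ∑_{i=1}^m exp(−(1−q)x_i/θ)(x_i − θ). Then g(θ) > 0 whenever 0 < θ < min_i x_i, and g(θ) → 0 as θ → 0⁺; consequently, by continuity, g has at least one root in the interval (min_i x_i, x̄). -/
/-!
Every summand of `g θ` is positive when `θ` lies below all the data, which gives positivity on
`(0, min x]`, and each summand tends to `0` as `θ → 0⁺` because `exp (-c / θ) → 0` for `c > 0`.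
At the mean, `∑ (x i - x̄) = 0` lets us subtract `f x̄` from the decreasing weight
`f t = exp (-(1 - q) t / x̄)`, so `g x̄ = ∑ (f (x i) - f x̄) (x i - x̄) < 0` termwise.
The intermediate value theorem on `[min x, x̄]` then yields the root.
-/

open Real Finset Filter Topology

lemma exists_ne_of_not_forall_eq {ι α : Type*} {x : ι → α} (hne : ¬ ∀ i j, x i = x j) (c : α) :
    ∃ i, x i ≠ c := by
  by_contra! h
  exact hne fun i j => (h i).trans (h j).symm

lemma Finset.sum_sub_average {ι : Type*} {s : Finset ι} (hs : s.Nonempty) (x : ι → ℝ) :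
    ∑ i ∈ s, (x i - (∑ j ∈ s, x j) / #s) = 0 := by
  have : (#s : ℝ) ≠ 0 := by exact_mod_cast hs.card_ne_zero
  rw [sum_sub_distrib, sum_const, nsmul_eq_mul]
  field_simp
  ring

lemma StrictAnti.mul_sub_neg {f : ℝ → ℝ} (hf : StrictAnti f) {a c : ℝ} (h : a ≠ c) :
    (f a - f c) * (a - c) < 0 := by
  rcases h.lt_or_gt with h | h
  · exact mul_neg_of_pos_of_neg (sub_pos.2 (hf h)) (sub_neg.2 h)
  · exact mul_neg_of_neg_of_pos (sub_neg.2 (hf h)) (sub_pos.2 h)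

lemma StrictAnti.sum_mul_sub_neg {ι : Type*} {s : Finset ι} {f : ℝ → ℝ} (hf : StrictAnti f)
    {x : ι → ℝ} {c : ℝ} (hc : ∑ i ∈ s, (x i - c) = 0) (hne : ∃ i ∈ s, x i ≠ c) :
    ∑ i ∈ s, f (x i) * (x i - c) < 0 := by
  have hshift : ∑ i ∈ s, f (x i) * (x i - c) = ∑ i ∈ s, (f (x i) - f c) * (x i - c) := by
    simp only [sub_mul, sum_sub_distrib, ← mul_sum, hc, mul_zero, sub_zero]
  rw [hshift]
  obtain ⟨j, hj, hjc⟩ := hne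
  refine sum_neg' (fun i _ => ?_) ⟨j, hj, hf.mul_sub_neg hjc⟩
  rcases eq_or_ne (x i) c with h | h
  · simp [h]
  · exact (hf.mul_sub_neg h).le

lemma tendsto_exp_neg_div_nhdsGT_zero {c : ℝ} (hc : 0 < c) :
    Tendsto (fun θ => exp (-c / θ)) (𝓝[>] 0) (𝓝 0) := by
  have : Tendsto (fun θ : ℝ => -c / θ) (𝓝[>] 0) atBot := by
    simpa only [div_eq_mul_inv] using
      tendsto_inv_nhdsGT_zero.const_mul_atTop_of_neg (neg_lt_zero.2 hc)
  exact tendsto_exp_atBot.comp this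

/-- The maximum Lq-likelihood estimating function of the exponential model with mean `θ`. -/
noncomputable def mlqScore {ι : Type*} [Fintype ι] (q : ℝ) (x : ι → ℝ) (θ : ℝ) : ℝ :=
  ∑ i, exp (-(1 - q) * x i / θ) * (x i - θ)

section mlqScore

variable {ι : Type*} [Fintype ι] {q : ℝ} {x : ι → ℝ}

lemma mlqScore_pos {θ : ℝ} (hle : ∀ i, θ ≤ x i) (hlt : ∃ i, θ < x i) : 0 < mlqScore q x θ := by
  obtain ⟨j, hj⟩ := hlt
  exact sum_pos' (fun i _ => mul_nonneg (exp_pos _).le (sub_nonneg.2 (hle i)))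
    ⟨j, mem_univ j, mul_pos (exp_pos _) (sub_pos.2 hj)⟩

lemma tendsto_mlqScore_nhdsGT_zero (hq : q < 1) (hx : ∀ i, 0 < x i) :
    Tendsto (mlqScore q x) (𝓝[>] 0) (𝓝 0) := by
  have hterm (i : ι) :
      Tendsto (fun θ => exp (-(1 - q) * x i / θ) * (x i - θ)) (𝓝[>] 0) (𝓝 (0 * (x i - 0))) := by
    have hexp := tendsto_exp_neg_div_nhdsGT_zero (mul_pos (sub_pos.2 hq) (hx i))
    simp only [← neg_mul] at hexp
    exact hexp.mul ((continuous_const.sub continuous_id).tendsto 0 |>.mono_left nhdsWithin_le_nhds)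
  have hsum := tendsto_finsetSum univ fun i _ => hterm i
  simp only [zero_mul, sum_const_zero] at hsum
  exact hsum

lemma mlqScore_neg_of_sum_sub_eq_zero (hq : q < 1) {c : ℝ} (hc0 : 0 < c)
    (hc : ∑ i, (x i - c) = 0) (hne : ∃ i, x i ≠ c) : mlqScore q x c < 0 := by
  have hf : StrictAnti fun t => exp (-(1 - q) * t / c) := fun a b hab => by
    have : -(1 - q) * b < -(1 - q) * a := by nlinarith
    exact exp_lt_exp.2 (div_lt_div_of_pos_right this hc0)
  obtain ⟨j, hj⟩ := hne
  exact hf.sum_mul_sub_neg hc ⟨j, mem_univ j, hj⟩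

lemma continuousOn_mlqScore : ContinuousOn (mlqScore q x) (Set.Ioi 0) :=
  continuousOn_finsetSum _ fun _ _ =>
    (continuous_exp.comp_continuousOn (continuousOn_const.div continuousOn_id
      fun _ hθ => (Set.mem_Ioi.1 hθ).ne')).mul (continuous_const.sub continuous_id).continuousOn

end mlqScore

theorem mlq_root_exists (m : ℕ) (hm : 2 ≤ m) (x : Fin m → ℝ)
    (hpos : ∀ i, 0 < x i) (hne : ¬ ∀ i j, x i = x j) (q : ℝ) (hq : q ∈ Set.Ioo (0:ℝ) 1)
    (xbar : ℝ) (hxbar : xbar = (∑ i, x i) / m)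
    (xmin : ℝ) (hxmin : xmin = Finset.univ.inf' (Finset.univ_nonempty_iff.mpr (Fin.pos_iff_nonempty.mp (by omega))) x)
    (g : ℝ → ℝ)
    (hg : ∀ θ, g θ = ∑ i, Real.exp (-(1 - q) * x i / θ) * (x i - θ)) :
    (∀ θ, 0 < θ → θ < xmin → 0 < g θ) ∧
    Tendsto g (nhdsWithin 0 (Set.Ioi 0)) (nhds 0) ∧
    ∃ θ ∈ Set.Ioo xmin xbar, g θ = 0 := by
  obtain rfl : g = mlqScore q x := funext hg
  have i₀ : Fin m := ⟨0, by omega⟩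
  have hmin_le (i : Fin m) : xmin ≤ x i := hxmin ▸ inf'_le _ (mem_univ i)
  have hmin_pos : 0 < xmin := by
    obtain ⟨i, -, hi⟩ := exists_mem_eq_inf' (univ_nonempty_iff.2 ⟨i₀⟩) x
    exact hxmin ▸ hi ▸ hpos i
  have hmean : ∑ i, (x i - xbar) = 0 := by
    simpa [hxbar] using sum_sub_average (univ_nonempty_iff.2 ⟨i₀⟩) x
  have hmin_lt_mean : xmin < xbar := by
    by_contra! hle
    have hall := (sum_eq_zero_iff_of_nonneg fun i _ => sub_nonneg.2 (hle.trans (hmin_le i))).1 hmean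
    obtain ⟨i, hi⟩ := exists_ne_of_not_forall_eq hne xbar
    exact hi (sub_eq_zero.1 (hall i (mem_univ i)))
  have hg_min : 0 < mlqScore q x xmin := by
    obtain ⟨i, hi⟩ := exists_ne_of_not_forall_eq hne xmin
    exact mlqScore_pos hmin_le ⟨i, (hmin_le i).lt_of_ne' hi⟩
  have hg_mean : mlqScore q x xbar < 0 :=
    mlqScore_neg_of_sum_sub_eq_zero hq.2 (hmin_pos.trans hmin_lt_mean) hmean
      (exists_ne_of_not_forall_eq hne xbar)
  refine ⟨fun θ _ hθ => mlqScore_pos (fun i => (hθ.trans_le (hmin_le i)).le)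
      ⟨i₀, hθ.trans_le (hmin_le _)⟩,
    tendsto_mlqScore_nhdsGT_zero hq.2 hpos, ?_⟩
  have hcont : ContinuousOn (mlqScore q x) (Set.Icc xmin xbar) :=
    continuousOn_mlqScore.mono fun θ hθ => hmin_pos.trans_le hθ.1
  exact intermediate_value_Ioo' hmin_lt_mean.le hcont ⟨hg_mean, hg_min⟩
end

section
/- Fix q ∈ (0,1), ε ∈ (0,1), 0 < p < c, and let μ = (1−ε)p + εc. Define h(θ) = (c(1−q) + θ)²(1−ε)(pq − θ) − (p(1−q) + θ)² ε(θ − cq). Then h(μ) < 0. -/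
/-!
Write `h μ = B² y - A² x` with `A = c(1-q) + μ`, `B = p(1-q) + μ`, `x = (1-ε)(μ - pq)` and
`y = ε(cq - μ)`. Then `0 < B < A` because `p < c`, `x > 0` because `μ > p > pq`, and
`x - y = (1-q)μ > 0` because `μ` is the `ε`-mixture of `p` and `c`; hence `B² y ≤ B² x < A² x`.
-/

lemma sq_mul_lt_sq_mul_of_le {a b x y : ℝ} (hb : 0 < b) (hba : b < a) (hx : 0 < x)
    (hyx : y ≤ x) : b ^ 2 * y < a ^ 2 * x :=
  calc b ^ 2 * y ≤ b ^ 2 * x := mul_le_mul_of_nonneg_left hyx (sq_nonneg b)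
    _ < a ^ 2 * x := mul_lt_mul_of_pos_right (pow_lt_pow_left₀ hba hb.le two_ne_zero) hx

theorem h_at_population_mean_neg (q ε p c : ℝ)
    (hq : q ∈ Set.Ioo (0:ℝ) 1) (hε : ε ∈ Set.Ioo (0:ℝ) 1)
    (hp : 0 < p) (hpc : p < c)
    (μ : ℝ) (hμ : μ = (1 - ε) * p + ε * c)
    (h : ℝ → ℝ)
    (hh : ∀ θ, h θ = (c * (1 - q) + θ) ^ 2 * (1 - ε) * (p * q - θ) -
      (p * (1 - q) + θ) ^ 2 * ε * (θ - c * q)) :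
    h μ < 0 := by
  obtain ⟨-, hq1⟩ := hq
  obtain ⟨hε0, hε1⟩ := hε
  have hpμ : p < μ := by
    have : μ - p = ε * (c - p) := by rw [hμ]; ring
    linarith [mul_pos hε0 (sub_pos.mpr hpc)]
  have hpqp : p * q < p := mul_lt_of_lt_one_right hp hq1
  have hb : 0 < p * (1 - q) + μ := by linarith [mul_pos hp (sub_pos.mpr hq1)]
  have hba : p * (1 - q) + μ < c * (1 - q) + μ := by gcongr
  have hx : 0 < (1 - ε) * (μ - p * q) := mul_pos (by linarith) (by linarith)
  have hyx : ε * (c * q - μ) ≤ (1 - ε) * (μ - p * q) := by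
    have hdiff : (1 - ε) * (μ - p * q) - ε * (c * q - μ) = (1 - q) * μ := by
      rw [hμ]; ring
    linarith [mul_pos (sub_pos.mpr hq1) (hp.trans hpμ)]
  have hsplit : h μ = (p * (1 - q) + μ) ^ 2 * (ε * (c * q - μ)) -
      (c * (1 - q) + μ) ^ 2 * ((1 - ε) * (μ - p * q)) := by
    rw [hh]; ring
  linarith [sq_mul_lt_sq_mul_of_le hb hba hx hyx]
end
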